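/- For an integer d ≥ 2, let s = s(d) be the unique natural number with C(s+2, 3) < d ≤ C(s+3, 3), and define D(d) = (d − C(s+2,3))·(C(s+2,2) − (d − C(s+2,3))) + 3, where C denotes the binomial coefficient. Then D(96) ≥ 3·96, and D(d) < 3·d for every d with 2 ≤ d ≤ 95. That is, d = 96 is the first value for which D(d) ≥ 3d. -/
import Mathlib


/-- The dimension of the locus of very compressed algebras `VC_{3,d}`: for
`C(s+2,3) < d ≤ C(s+3,3)` it equals `(d − C(s+2,3))·(C(s+2,2) − (d − C(s+2,3))) + 3`. -/
def vcDim (d s : ℕ) : ℕ :=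
  (d - Nat.choose (s + 2) 3) * (Nat.choose (s + 2) 2 - (d - Nat.choose (s + 2) 3)) + 3

lemma s_le_seven {s d : ℕ} (hd : d ≤ 96) (h : Nat.choose (s + 2) 3 < d) : s ≤ 7 := by
  by_contra hs
  push_neg at hs
  have h10 : (10 : ℕ) ≤ s + 2 := by omega
  have h := Nat.choose_le_choose 3 h10
  have h120 : Nat.choose 10 3 = 120 := by decide
  omega

lemma small_check : ∀ d < 96, ∀ s < 8, 2 ≤ d →
    Nat.choose (s + 2) 3 < d → d ≤ Nat.choose (s + 3) 3 → vcDim d s < 3 * d := by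
  decide

/-- `d = 96` is the first value for which `dim VC_{3,d} ≥ 3d`: the dimension is `≥ 3·96`
at `d = 96` and `< 3d` for all `2 ≤ d ≤ 95` (with `s` determined by
`C(s+2,3) < d ≤ C(s+3,3)`). -/
theorem stmt_12 :
    (∀ s : ℕ, Nat.choose (s + 2) 3 < 96 → 96 ≤ Nat.choose (s + 3) 3 →
      3 * 96 ≤ vcDim 96 s) ∧
    (∀ d s : ℕ, 2 ≤ d → d ≤ 95 →
      Nat.choose (s + 2) 3 < d → d ≤ Nat.choose (s + 3) 3 →
      vcDim d s < 3 * d) := by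
  constructor
  · intro s h1 h2
    have hs7 : s ≤ 7 := s_le_seven (le_refl 96) h1
    interval_cases s <;> simp_all [vcDim, Nat.choose]
  · intro d s h2 h95 hlo hhi
    have hs : s ≤ 7 := s_le_seven (by omega) hlo
    exact small_check d (by omega) s (by omega) h2 hlo hhi
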